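/- For all d ≥ 1, all x ∈ U_n^ı, all α ∈ V^{ı*}_{p,n,d} and all β ∈ V^{ı*}_{n,r,d}, one has ρ_{p,n,d}(α·x) ∘ ρ_{n,r,d}(β) = ρ_{p,n,d}(α) ∘ ρ_{n,r,d}(x·β) as linear maps 𝕍_R^{⊗d} → 𝕍_P^{⊗d}. Consequently the composition map Φ_{p,r,d}: V^{ı*}_{p,n,d} ⊗ V^{ı*}_{n,r,d} → Hom_K(𝕍_R^{⊗d}, 𝕍_P^{⊗d}), α⊗β ↦ ρ_{p,n,d}(α)∘ρ_{n,r,d}(β), factors through V^{ı*}_{p,n,d} ⊗_{U_n^ı} V^{ı*}_{n,r,d}. -/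

import Mathlib

set_option synthInstance.maxHeartbeats 800000
set_option maxHeartbeats 1600000

noncomputable section
open scoped TensorProduct
open TensorProduct

/-- The ground field `K = ℂ(q)`. -/
abbrev KK : Type := RatFunc ℂ

/-- The indeterminate `q ∈ ℂ(q)`. -/
noncomputable def qq : KK := RatFunc.X

namespace IQG

/-! ### The quantum general linear group `U_N`, `N = ν + 1`.

We parametrize by `ν = 2n ∈ ℕ` (`n ∈ ½ℕ`), so `N = ν + 1 = 2n + 1`.  The index set
`n̲ = {−n, …, n}` is identified with `Fin (ν+1)` via `i ↦ i − n`, and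
`𝕀_n = {−n+½, …, n−½}` with `Fin ν` via `i ↦ i − n + ½`.  Under this identification
the negation map `i ↦ −i` becomes `Fin.rev`, an element `i ∈ n̲` satisfies `i > 0`
iff `2·i > ν`, and `i = 0` iff `2·i = ν`. -/

/-- Generators of `U_N`: `E_i, F_i (i ∈ 𝕀_n)`, `D_a^{±1} (a ∈ n̲)`. -/
inductive UGen (ν : ℕ) : Type
  | E : Fin ν → UGen ν
  | F : Fin ν → UGen ν
  | D : Fin (ν + 1) → UGen ν
  | Dinv : Fin (ν + 1) → UGen ν

abbrev UFree (ν : ℕ) := FreeAlgebra KK (UGen ν)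

namespace UFree
variable {ν : ℕ}
def e (i : Fin ν) : UFree ν := FreeAlgebra.ι KK (UGen.E i)
def f (i : Fin ν) : UFree ν := FreeAlgebra.ι KK (UGen.F i)
def d (a : Fin (ν + 1)) : UFree ν := FreeAlgebra.ι KK (UGen.D a)
def dinv (a : Fin (ν + 1)) : UFree ν := FreeAlgebra.ι KK (UGen.Dinv a)
/-- `K_i = D_{i−½} D_{i+½}^{-1}`. -/
def k (i : Fin ν) : UFree ν := d i.castSucc * dinv i.succ
/-- `K_i^{-1} = D_{i−½}^{-1} D_{i+½}`. -/
def kinv (i : Fin ν) : UFree ν := dinv i.castSucc * d i.succ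
end UFree

/-- The defining relations of `U_N` (in the identification described above,
`δ_{a−½,i}` becomes `δ_{a,i+1}` and `δ_{a+½,i}` becomes `δ_{a,i}`). -/
inductive URel (ν : ℕ) : UFree ν → UFree ν → Prop
  | dd_inv (a) : URel ν (UFree.d a * UFree.dinv a) 1
  | dinv_d (a) : URel ν (UFree.dinv a * UFree.d a) 1
  | dd (a b) : URel ν (UFree.d a * UFree.d b) (UFree.d b * UFree.d a)
  | ddinv (a b) : URel ν (UFree.d a * UFree.dinv b) (UFree.dinv b * UFree.d a)
  | dinvdinv (a b) : URel ν (UFree.dinv a * UFree.dinv b) (UFree.dinv b * UFree.dinv a)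
  | de (a : Fin (ν+1)) (i : Fin ν) : URel ν (UFree.d a * UFree.e i)
      (((if (a : ℕ) = (i : ℕ) + 1 then qq else 1) * (if (a : ℕ) = (i : ℕ) then qq⁻¹ else 1)) •
        (UFree.e i * UFree.d a))
  | df (a : Fin (ν+1)) (i : Fin ν) : URel ν (UFree.d a * UFree.f i)
      (((if (a : ℕ) = (i : ℕ) then qq else 1) * (if (a : ℕ) = (i : ℕ) + 1 then qq⁻¹ else 1)) •
        (UFree.f i * UFree.d a))
  | ef (i j : Fin ν) : URel ν (UFree.e i * UFree.f j - UFree.f j * UFree.e i)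
      (if i = j then (qq - qq⁻¹)⁻¹ • (UFree.k i - UFree.kinv i) else 0)
  | ee (i j : Fin ν) (h : 1 < ((i : ℤ) - (j : ℤ)).natAbs) :
      URel ν (UFree.e i * UFree.e j) (UFree.e j * UFree.e i)
  | ff (i j : Fin ν) (h : 1 < ((i : ℤ) - (j : ℤ)).natAbs) :
      URel ν (UFree.f i * UFree.f j) (UFree.f j * UFree.f i)
  | serre_e (i j : Fin ν) (h : ((i : ℤ) - (j : ℤ)).natAbs = 1) :
      URel ν (UFree.e i * UFree.e i * UFree.e j + UFree.e j * (UFree.e i * UFree.e i))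
        ((qq + qq⁻¹) • (UFree.e i * UFree.e j * UFree.e i))
  | serre_f (i j : Fin ν) (h : ((i : ℤ) - (j : ℤ)).natAbs = 1) :
      URel ν (UFree.f i * UFree.f i * UFree.f j + UFree.f j * (UFree.f i * UFree.f i))
        ((qq + qq⁻¹) • (UFree.f i * UFree.f j * UFree.f i))

/-- The quantum general linear group `U_N = U_q(gl_N)`, `N = ν + 1`. -/
abbrev U (ν : ℕ) := RingQuot (URel ν)

def Umk (ν : ℕ) : UFree ν →ₐ[KK] U ν := RingQuot.mkAlgHom KK (URel ν)

def UE {ν : ℕ} (i : Fin ν) : U ν := Umk ν (UFree.e i)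
def UF {ν : ℕ} (i : Fin ν) : U ν := Umk ν (UFree.f i)
def UD {ν : ℕ} (a : Fin (ν + 1)) : U ν := Umk ν (UFree.d a)
def UDinv {ν : ℕ} (a : Fin (ν + 1)) : U ν := Umk ν (UFree.dinv a)
def UK {ν : ℕ} (i : Fin ν) : U ν := Umk ν (UFree.k i)
def UKinv {ν : ℕ} (i : Fin ν) : U ν := Umk ν (UFree.kinv i)

/-! ### The ıquantum group `U_n^ı` -/

/-- `e_i = E_i + K_i^{-1} F_{−i}` (negation on `𝕀_n` is `Fin.rev`). -/
def ie {ν : ℕ} (i : Fin ν) : U ν := UE i + UKinv i * UF i.rev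
/-- `f_i = E_{−i} + F_i K_{−i}^{-1}`. -/
def iff' {ν : ℕ} (i : Fin ν) : U ν := UE i.rev + UF i * UKinv i.rev
/-- `d_a = D_a D_{−a}`. -/
def idd {ν : ℕ} (a : Fin (ν + 1)) : U ν := UD a * UD a.rev
/-- `t = E_0 + q F_0 K_0^{-1} + K_0^{-1}` (where `0 ∈ 𝕀_n` is the index `i` with `2i = ν - 1`;
it exists only when `ν` is odd, i.e. `n ∈ ½ + ℕ`). -/
def it {ν : ℕ} (i : Fin ν) : U ν := UE i + qq • (UF i * UKinv i) + UKinv i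

/-- The generating set of the ıquantum group `U_n^ı ⊆ U_N`. -/
def iGenSet (ν : ℕ) : Set (U ν) :=
  {x | (∃ i, x = ie i) ∨ (∃ i, x = iff' i) ∨
    (∃ a : Fin (ν + 1), ν ≤ 2 * (a : ℕ) ∧ x = idd a) ∨
    (∃ h : Odd ν, x = it ⟨(ν - 1) / 2, by rcases h with ⟨k, hk⟩; omega⟩)}

/-- The ıquantum group `U_n^ı`, a subalgebra of `U_N`. -/
def Ui (ν : ℕ) : Subalgebra KK (U ν) := Algebra.adjoin KK (iGenSet ν)

/-! ### Hopf-algebra structure data on `U_N`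

The coproduct, counit, and antipode of `U_N` are algebra homomorphisms determined by their
(standard) values on the generators; we package these values as a structure. -/

structure HopfData (ν : ℕ) where
  Δ : U ν →ₐ[KK] (U ν ⊗[KK] U ν)
  ε : U ν →ₐ[KK] KK
  S : U ν →ₐ[KK] (U ν)ᵐᵒᵖ
  ΔE : ∀ i, Δ (UE i) = UE i ⊗ₜ UKinv i + 1 ⊗ₜ UE i
  ΔF : ∀ i, Δ (UF i) = UF i ⊗ₜ 1 + UK i ⊗ₜ UF i
  ΔD : ∀ a, Δ (UD a) = UD a ⊗ₜ UD a
  ΔDinv : ∀ a, Δ (UDinv a) = UDinv a ⊗ₜ UDinv a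
  εE : ∀ i, ε (UE i) = 0
  εF : ∀ i, ε (UF i) = 0
  εD : ∀ a, ε (UD a) = 1
  εDinv : ∀ a, ε (UDinv a) = 1
  SE : ∀ i, S (UE i) = MulOpposite.op (-(UE i * UK i))
  SF : ∀ i, S (UF i) = MulOpposite.op (-(UKinv i * UF i))
  SD : ∀ a, S (UD a) = MulOpposite.op (UDinv a)
  SDinv : ∀ a, S (UDinv a) = MulOpposite.op (UD a)

/-! ### The natural representation `𝕍_N` and its matrix coefficients

`𝕍_N` has basis `{v_j : j ∈ n̲}`; the matrix coefficients `t_{ij} ∈ U_N^*` satisfy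
`x v_j = Σ_i ⟨t_{ij}, x⟩ v_i`, i.e. `⟨t_{ij}, x⟩ = (ρ x) i j` for the matrix
representation `ρ`. -/

structure RepData (ν : ℕ) where
  ρ : U ν →ₐ[KK] Matrix (Fin (ν + 1)) (Fin (ν + 1)) KK
  ρE : ∀ i, ρ (UE i) = Matrix.single i.castSucc i.succ 1
  ρF : ∀ i, ρ (UF i) = Matrix.single i.succ i.castSucc 1
  ρD : ∀ a, ρ (UD a) = Matrix.diagonal (fun b => if b = a then qq else 1)
  ρDinv : ∀ a, ρ (UDinv a) = Matrix.diagonal (fun b => if b = a then qq⁻¹ else 1)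

/-! ### The quantum coordinate algebra `V_{N,M}` -/

/-- Generators `t_{ij}`, `i ∈ n̲`, `j ∈ m̲` (`ν = 2n`, `μ = 2m`). -/
abbrev VFree (ν μ : ℕ) := FreeAlgebra KK (Fin (ν + 1) × Fin (μ + 1))

def tf {ν μ : ℕ} (i : Fin (ν + 1)) (j : Fin (μ + 1)) : VFree ν μ := FreeAlgebra.ι KK (i, j)

/-- The defining relations of the quantum coordinate algebra `V_{N,M}`. -/
inductive VRel (ν μ : ℕ) : VFree ν μ → VFree ν μ → Prop
  | r1 (i k : Fin (ν+1)) (j l : Fin (μ+1)) (h1 : i < k) (h2 : j < l) :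
      VRel ν μ (tf i j * tf k l) (tf k l * tf i j + (qq - qq⁻¹) • (tf i l * tf k j))
  | r2 (i k : Fin (ν+1)) (j l : Fin (μ+1)) (h1 : i < k) (h2 : j < l) :
      VRel ν μ (tf i l * tf k j) (tf k j * tf i l)
  | r3 (i : Fin (ν+1)) (j l : Fin (μ+1)) (h2 : j < l) :
      VRel ν μ (tf i j * tf i l) (qq • (tf i l * tf i j))
  | r4 (i k : Fin (ν+1)) (j : Fin (μ+1)) (h1 : i < k) :
      VRel ν μ (tf i j * tf k j) (qq • (tf k j * tf i j))

/-- The quantum coordinate algebra `V_{N,M}` (`N = ν+1`, `M = μ+1`). -/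
abbrev Vc (ν μ : ℕ) := RingQuot (VRel ν μ)

def Vmk (ν μ : ℕ) : VFree ν μ →ₐ[KK] Vc ν μ := RingQuot.mkAlgHom KK (VRel ν μ)

/-- The generator `t_{ij} ∈ V_{N,M}`. -/
def Tc {ν μ : ℕ} (i : Fin (ν + 1)) (j : Fin (μ + 1)) : Vc ν μ := Vmk ν μ (tf i j)

/-- The ordered monomial `t_{iijj} = t_{i₁j₁} ⋯ t_{i_dj_d}`. -/
def tprod {ν μ : ℕ} {d : ℕ} (ii : Fin d → Fin (ν + 1)) (jj : Fin d → Fin (μ + 1)) : Vc ν μ :=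
  (List.ofFn (fun a => Tc (ii a) (jj a))).prod

end IQG
/-! ### Part 2: module-algebra structures, matrix coefficients, quotients, Hecke, minors -/

namespace IQG

/-- The bilinear map `(x, y) ↦ (x·f)(y·g)` used to state the module-algebra axiom
`c·(fg) = (c₍₁₎·f)(c₍₂₎·g)` in Sweedler-free form. -/
def mulBil {H A : Type*} [AddCommMonoid H] [Module KK H] [Semiring A] [Algebra KK A]
    (act : H →ₗ[KK] A →ₗ[KK] A) (f g : A) : H →ₗ[KK] H →ₗ[KK] A :=
  LinearMap.mk₂ KK (fun x y => act x f * act y g)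
    (fun x x' y => by simp [add_mul]) (fun c x y => by simp [smul_mul_assoc])
    (fun x y y' => by simp [mul_add]) (fun c x y => by simp [mul_smul_comm])

/-- The structure of a left `U_M`-module algebra on `V_{N,M}` (`ν = 2n`, `μ = 2m`),
with the action determined on generators by `x·t_{ij} = Σ_k ⟨t_{kj}, x⟩ t_{ik}`. -/
structure LModAlg (ν μ : ℕ) (hd : HopfData μ) (rd : RepData μ) where
  act : U μ →ₗ[KK] Vc ν μ →ₗ[KK] Vc ν μ
  act_one : act 1 = LinearMap.id
  act_mul : ∀ x y, act (x * y) = act x ∘ₗ act y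
  act_unit : ∀ x, act x (1 : Vc ν μ) = hd.ε x • (1 : Vc ν μ)
  act_alg : ∀ x f g, act x (f * g) = TensorProduct.lift (mulBil act f g) (hd.Δ x)
  act_gen : ∀ x i j, act x (Tc i j) = ∑ k, rd.ρ x k j • Tc i k

/-- The structure of a right `U_N`-module algebra on `V_{N,M}` (the right action written on
the left: `act y f = f·y`), determined on generators by `t_{ij}·y = Σ_k ⟨t_{ik}, y⟩ t_{kj}`. -/
structure RModAlg (ν μ : ℕ) (hd : HopfData ν) (rd : RepData ν) where
  act : U ν →ₗ[KK] Vc ν μ →ₗ[KK] Vc ν μ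
  act_one : act 1 = LinearMap.id
  act_mul : ∀ x y, act (x * y) = act y ∘ₗ act x
  act_unit : ∀ y, act y (1 : Vc ν μ) = hd.ε y • (1 : Vc ν μ)
  act_alg : ∀ y f g, act y (f * g) = TensorProduct.lift (mulBil act f g) (hd.Δ y)
  act_gen : ∀ y i j, act y (Tc i j) = ∑ k, rd.ρ y i k • Tc k j

/-- The matrix entry `(i,j)` as a linear functional on matrices. -/
def entryLM {m : Type*} (i j : m) : Matrix m m KK →ₗ[KK] KK where
  toFun M := M i j
  map_add' _ _ := rfl
  map_smul' _ _ := rfl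

/-- The matrix coefficients `x_{iijj} = Π_a ⟨t_{ii(a) jj(a)}, x₍ₐ₎⟩` of the `d`-th tensor
power of the natural representation, where `Δ^{(d−1)}(x) = x₍₁₎ ⊗ ⋯ ⊗ x₍d₎` is the iterated
coproduct (for `d = 0` this is the counit, for `d = 1` the matrix representation itself). -/
def matCoeff {μ : ℕ} (hd : HopfData μ) (rd : RepData μ) :
    (d : ℕ) → U μ →ₗ[KK] ((Fin d → Fin (μ + 1)) → (Fin d → Fin (μ + 1)) → KK)
  | 0 => LinearMap.pi fun _ => LinearMap.pi fun _ => hd.ε.toLinearMap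
  | 1 => LinearMap.pi fun ii => LinearMap.pi fun jj =>
      (entryLM (ii 0) (jj 0)).comp rd.ρ.toLinearMap
  | d + 2 =>
    (TensorProduct.lift (LinearMap.mk₂ KK
      (fun x y => fun ii jj =>
        rd.ρ x (ii 0) (jj 0) * matCoeff hd rd (d + 1) y (Fin.tail ii) (Fin.tail jj))
      (fun x x' y => by
        funext ii jj
        simp [map_add, Matrix.add_apply, add_mul, Pi.add_apply])
      (fun c x y => by
        funext ii jj
        simp [map_smul, Matrix.smul_apply, Pi.smul_apply, smul_eq_mul, mul_assoc])
      (fun x y y' => by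
        funext ii jj
        simp [map_add, mul_add, Pi.add_apply])
      (fun c x y => by
        funext ii jj
        simp [map_smul, Pi.smul_apply, smul_eq_mul]; ring))) ∘ₗ hd.Δ.toLinearMap

end IQG
namespace IQG

/-! ### The ı-coordinate module `V^ı_{n,m} = V_{N,M} / I_{n,m}` -/

/-- The right ideal of an algebra generated by a set `S`, as a `KK`-submodule. -/
def rIdealSpan {A : Type*} [Semiring A] [Algebra KK A] (S : Set A) : Submodule KK A :=
  Submodule.span KK {x | ∃ s ∈ S, ∃ v : A, x = s * v}

/-- The generators of the right ideal `I_{n,m}` of `V_{N,M}`.  Recall `i > 0` iff `ν < 2i`,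
`−i = i.rev`, and the index `0 ∈ m̲` (present iff `μ` is even, i.e. `m ∈ ℤ`) is `μ/2`. -/
def iIdealGens (ν μ : ℕ) : Set (Vc ν μ) :=
  {x | (∃ i : Fin (ν + 1), ∃ j : Fin (μ + 1), ν < 2 * (i : ℕ) ∧ μ < 2 * (j : ℕ) ∧
        x = Tc i j - Tc i.rev j.rev + (qq⁻¹ - qq) • Tc i j.rev) ∨
    (∃ i : Fin (ν + 1), ∃ j : Fin (μ + 1), ν < 2 * (i : ℕ) ∧ μ < 2 * (j : ℕ) ∧
        x = Tc i j.rev - Tc i.rev j) ∨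
    (∃ i : Fin (ν + 1), ν < 2 * (i : ℕ) ∧ Even μ ∧
        x = Tc i ⟨μ / 2, by omega⟩ - qq • Tc i.rev ⟨μ / 2, by omega⟩) ∨
    (∃ j : Fin (μ + 1), μ < 2 * (j : ℕ) ∧ Even ν ∧
        x = Tc ⟨ν / 2, by omega⟩ j - qq • Tc ⟨ν / 2, by omega⟩ j.rev)}

/-- The right ideal `I_{n,m} ⊆ V_{N,M}` (as a `KK`-submodule). -/
def Isub (ν μ : ℕ) : Submodule KK (Vc ν μ) := rIdealSpan (iIdealGens ν μ)

/-- `V^ı_{n,m} = V_{N,M} / I_{n,m}`. -/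
abbrev Viq (ν μ : ℕ) := Vc ν μ ⧸ Isub ν μ

/-- The canonical projection `f ↦ f̃`. -/
def Vimk (ν μ : ℕ) : Vc ν μ →ₗ[KK] Viq ν μ := (Isub ν μ).mkQ

/-- `t̃_{iijj} ∈ V^ı_{n,m}`. -/
def itprod {ν μ d : ℕ} (ii : Fin d → Fin (ν + 1)) (jj : Fin d → Fin (μ + 1)) : Viq ν μ :=
  Vimk ν μ (tprod ii jj)

lemma Isub_mul_mem {ν μ : ℕ} {x : Vc ν μ} (hx : x ∈ Isub ν μ) (g : Vc ν μ) :
    x * g ∈ Isub ν μ := by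
  induction hx using Submodule.span_induction with
  | mem y hy =>
    obtain ⟨s, hs, v, rfl⟩ := hy
    exact Submodule.subset_span ⟨s, hs, v * g, (mul_assoc s v g)⟩
  | zero => simpa using (Isub ν μ).zero_mem
  | add y z _ _ hy hz => simpa [add_mul] using (Isub ν μ).add_mem hy hz
  | smul c y _ hy => simpa [smul_mul_assoc] using (Isub ν μ).smul_mem c hy

/-- Right multiplication by `g ∈ V_{N,M}` descends to `V^ı_{n,m}` (as `I_{n,m}` is a right
ideal); this makes `V^ı_{n,m}` a right `V_{N,M}`-module. -/
def rmulQ {ν μ : ℕ} (g : Vc ν μ) : Viq ν μ →ₗ[KK] Viq ν μ :=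
  Submodule.liftQ (Isub ν μ) ((Vimk ν μ) ∘ₗ (LinearMap.mulRight KK g)) (by
    intro x hx
    simp only [LinearMap.mem_ker, LinearMap.comp_apply, LinearMap.mulRight_apply]
    rw [Vimk, Submodule.mkQ_apply, Submodule.Quotient.mk_eq_zero]
    exact Isub_mul_mem hx g)

/-- The degree-`d` homogeneous component `V^ı_{n,m,d}`: the span of the `t̃_{iijj}` with
`ii ∈ n̲^d`, `jj ∈ m̲^d`. -/
def Vid (ν μ d : ℕ) : Submodule KK (Viq ν μ) :=
  Submodule.span KK {x | ∃ ii jj, x = itprod (ν := ν) (μ := μ) (d := d) ii jj}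

lemma itprod_mem {ν μ d : ℕ} (ii : Fin d → Fin (ν + 1)) (jj : Fin d → Fin (μ + 1)) :
    itprod ii jj ∈ Vid ν μ d :=
  Submodule.subset_span ⟨ii, jj, rfl⟩

/-- `t̃_{iijj}` as an element of `V^ı_{n,m,d}`. -/
def itprodD {ν μ d : ℕ} (ii : Fin d → Fin (ν + 1)) (jj : Fin d → Fin (μ + 1)) :
    ↥(Vid ν μ d) := ⟨itprod ii jj, itprod_mem ii jj⟩

/-- The map `ρ_{n,m,d} : V^{ı*}_{n,m,d} → Hom_K(𝕍_M^{⊗d}, 𝕍_N^{⊗d})`,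
`ρ(α) v_jj = Σ_ii ⟨α, t̃_{iijj}⟩ v_ii`; tensor powers are realized as function spaces with
basis indexed by tuples. -/
def rhoFun {ν μ d : ℕ} (α : Module.Dual KK ↥(Vid ν μ d)) :
    ((Fin d → Fin (μ + 1)) → KK) →ₗ[KK] ((Fin d → Fin (ν + 1)) → KK) :=
  Matrix.mulVecLin (Matrix.of fun ii jj => α (itprodD ii jj))

/-! ### Hecke operators on tensor space -/

/-- The right action of `s₀` on tuples: `ii s₀ = (−i₁, i₂, …)`. -/
def s0t {ν d : ℕ} (ii : Fin (d + 1) → Fin (ν + 1)) : Fin (d + 1) → Fin (ν + 1) :=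
  Function.update ii 0 (ii 0).rev

/-- The right action of `s_a` (`a = b+1`) on tuples: swap the entries in positions `a, a+1`
(1-indexed), i.e. `b, b+1` (0-indexed). -/
def swt {ν d : ℕ} (b : Fin d) (ii : Fin (d + 1) → Fin (ν + 1)) : Fin (d + 1) → Fin (ν + 1) :=
  ii ∘ (Equiv.swap b.castSucc b.succ)

/-- The matrix of the operator `T₀` on `𝕍_N^{⊗(d+1)}` in the row convention
`v_ii T₀ = Σ_jj (M₀)_{ii,jj} v_jj`. -/
def hMat0 (ν d : ℕ) :
    Matrix (Fin (d + 1) → Fin (ν + 1)) (Fin (d + 1) → Fin (ν + 1)) KK :=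
  Matrix.of fun ii jj =>
    if ν < 2 * ((ii 0 : ℕ)) then (if jj = s0t ii then 1 else 0)
    else if 2 * ((ii 0 : ℕ)) = ν then (if jj = s0t ii then qq⁻¹ else 0)
    else (if jj = s0t ii then 1 else 0) + (if jj = ii then qq⁻¹ - qq else 0)

/-- The matrix of the operator `T_{b+1}` on `𝕍_N^{⊗(d+1)}` in the row convention. -/
def hMatS (ν : ℕ) {d : ℕ} (b : Fin d) :
    Matrix (Fin (d + 1) → Fin (ν + 1)) (Fin (d + 1) → Fin (ν + 1)) KK :=
  Matrix.of fun ii jj =>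
    if ii b.castSucc < ii b.succ then (if jj = swt b ii then 1 else 0)
    else if ii b.castSucc = ii b.succ then (if jj = ii then qq⁻¹ else 0)
    else (if jj = swt b ii then 1 else 0) + (if jj = ii then qq⁻¹ - qq else 0)

/-! ### The Hecke algebra of type `B_d`, `d = dm + 1` -/

inductive HGen (dm : ℕ) : Type
  | T0 : HGen dm
  | Ts : Fin dm → HGen dm

abbrev HFree (dm : ℕ) := FreeAlgebra KK (HGen dm)
def hg0 {dm : ℕ} : HFree dm := FreeAlgebra.ι KK HGen.T0
def hgs {dm : ℕ} (b : Fin dm) : HFree dm := FreeAlgebra.ι KK (HGen.Ts b)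

/-- The defining relations of the Hecke algebra `H_{B_d}` (`d = dm + 1`), with generators
`T₀` and `T_{b+1} (b ∈ Fin dm)`. -/
inductive HRel (dm : ℕ) : HFree dm → HFree dm → Prop
  | quad0 : HRel dm ((hg0 - algebraMap KK _ qq⁻¹) * (hg0 + algebraMap KK _ qq)) 0
  | quadS (b : Fin dm) : HRel dm ((hgs b - algebraMap KK _ qq⁻¹) * (hgs b + algebraMap KK _ qq)) 0
  | braid0 (b : Fin dm) (h : (b : ℕ) = 0) :
      HRel dm (hg0 * hgs b * (hg0 * hgs b)) (hgs b * hg0 * (hgs b * hg0))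
  | braidS (b c : Fin dm) (h : (b : ℕ) + 1 = (c : ℕ)) :
      HRel dm (hgs b * hgs c * hgs b) (hgs c * hgs b * hgs c)
  | comm0 (b : Fin dm) (h : 1 ≤ (b : ℕ)) : HRel dm (hg0 * hgs b) (hgs b * hg0)
  | commS (b c : Fin dm) (h : (b : ℕ) + 1 < (c : ℕ)) : HRel dm (hgs b * hgs c) (hgs c * hgs b)

/-- The Hecke algebra `H_{B_{dm+1}}` of type `B_{dm+1}`. -/
abbrev Hecke (dm : ℕ) := RingQuot (HRel dm)
def Hmk (dm : ℕ) : HFree dm →ₐ[KK] Hecke dm := RingQuot.mkAlgHom KK (HRel dm)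

/-- The generators `T₀, T₁, …, T_{dm}` of `H_{B_{dm+1}}`. -/
def HT {dm : ℕ} : Fin (dm + 1) → Hecke dm :=
  Fin.cases (Hmk dm hg0) (fun b => Hmk dm (hgs b))

/-! ### The Coxeter group `W_{B_d}` -/

/-- The Coxeter matrix of type `B_d`, with the 4-bond between the nodes `0` and `1`
(so that `s₀` is the distinguished reflection of the paper). -/
def BMat (d : ℕ) : CoxeterMatrix (Fin d) where
  M := Matrix.of fun i j =>
    if i = j then 1
    else if ((i : ℕ) = 0 ∧ (j : ℕ) = 1) ∨ ((j : ℕ) = 0 ∧ (i : ℕ) = 1) then 4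
    else if (i : ℕ) + 1 = (j : ℕ) ∨ (j : ℕ) + 1 = (i : ℕ) then 3 else 2
  isSymm := by
    unfold Matrix.IsSymm
    ext i j
    simp only [Matrix.transpose_apply, Matrix.of_apply]
    rcases eq_or_ne i j with h | h
    · simp [h]
    · simp only [h, h.symm, if_false]
      by_cases h1 : ((j : ℕ) = 0 ∧ (i : ℕ) = 1) ∨ ((i : ℕ) = 0 ∧ (j : ℕ) = 1)
      · rw [if_pos h1, if_pos (Or.symm h1)]
      · rw [if_neg h1, if_neg (fun hc => h1 (Or.symm hc))]
        by_cases h2 : (j : ℕ) + 1 = (i : ℕ) ∨ (i : ℕ) + 1 = (j : ℕ)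
        · rw [if_pos h2, if_pos (Or.symm h2)]
        · rw [if_neg h2, if_neg (fun hc => h2 (Or.symm hc))]
  diagonal := by intro i; simp
  off_diagonal := by
    intro i j h
    simp only [Matrix.of_apply, h, if_false]
    split <;> [skip; split] <;> omega

/-- The Weyl group `W_{B_d}` of type `B_d`, presented as a Coxeter group. -/
abbrev WB (d : ℕ) := (BMat d).Group

/-- The distinguished Coxeter system of `W_{B_d}`. -/
def csB (d : ℕ) : CoxeterSystem (BMat d) (WB d) := (BMat d).toCoxeterSystem

end IQG
namespace IQG

/-! ### Quantum minors and ıquantum minors -/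

/-- The length (inversion number) of a permutation. -/
def permLen {d : ℕ} (w : Equiv.Perm (Fin d)) : ℕ :=
  (Finset.univ.filter (fun p : Fin d × Fin d => p.1 < p.2 ∧ w p.2 < w p.1)).card

/-- The quantum minor `Δ(ii, jj) = Σ_{w ∈ 𝔖_d} (−q)^{ℓ(w)} t_{ii, jj∘w} ∈ V_{N,M}`
(for `ii, jj` strictly increasing). -/
def qminor {ν μ d : ℕ} (ii : Fin d → Fin (ν + 1)) (jj : Fin d → Fin (μ + 1)) : Vc ν μ :=
  ∑ w : Equiv.Perm (Fin d), ((-qq) ^ permLen w) • tprod ii (jj ∘ w)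

/-- The quantum minor `Δ(ii, kk)` for an arbitrary (injective) tuple `kk`: writing
`kk = kk' σ` with `kk'` increasing, `Δ(ii, kk' σ) = (−q)^{ℓ(σ)} Δ(ii, kk')`.
(`Tuple.sort kk` is the permutation sorting `kk`.) -/
def qminorGen {ν μ d : ℕ} (ii : Fin d → Fin (ν + 1)) (kk : Fin d → Fin (μ + 1)) : Vc ν μ :=
  ((-qq) ^ permLen (Tuple.sort kk)) • qminor ii (kk ∘ Tuple.sort kk)

/-- `n⁺ = ⌈n + ½⌉` where `ν = 2n`. -/
def nplus (ν : ℕ) : ℕ := ν / 2 + 1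
/-- `n⁻ = ⌊n + ½⌋` where `ν = 2n`. -/
def nminus (ν : ℕ) : ℕ := (ν + 1) / 2

/-- `|k| ∈ m̲` for `k ∈ m̲` (recall `k ≥ 0` iff `μ ≤ 2k`, and `−k = k.rev`). -/
def absF {μ : ℕ} (k : Fin (μ + 1)) : Fin (μ + 1) := if μ ≤ 2 * (k : ℕ) then k else k.rev

/-- `ℓ₀(kk) = #{a : kk a < 0}`. -/
def negCount {μ d : ℕ} (kk : Fin d → Fin (μ + 1)) : ℕ :=
  (Finset.univ.filter (fun a => 2 * ((kk a : ℕ)) < μ)).card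

/-- The index set `𝔄^{ı+}_{n,m}`: strictly increasing tuples in `m̲^{n⁺}` with all entries
`≥ 0`. -/
def APos (ν μ : ℕ) : Set (Fin (nplus ν) → Fin (μ + 1)) :=
  {ii | StrictMono ii ∧ ∀ a, μ ≤ 2 * ((ii a : ℕ))}

/-- The index set `𝔄^{ı−}_{n,m}`: strictly increasing tuples in `m̲^{n⁻}` with all entries
`> 0`. -/
def ANeg (ν μ : ℕ) : Set (Fin (nminus ν) → Fin (μ + 1)) :=
  {ii | StrictMono ii ∧ ∀ a, μ < 2 * ((ii a : ℕ))}

/-- The positive ıquantum `n`-minor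
`Δ^{ı+}(ii,jj) = Σ_{|kk| = jj} q^{−ℓ₀(kk)} (Δ(ii,kk))~ ∈ V^ı_{p,r}`. -/
def iminorPos {pp rr : ℕ} (ν : ℕ) (ii : Fin (nplus ν) → Fin (pp + 1))
    (jj : Fin (nplus ν) → Fin (rr + 1)) : Viq pp rr :=
  ∑ kk ∈ Finset.univ.filter
      (fun kk : Fin (nplus ν) → Fin (rr + 1) => absF ∘ kk = jj),
    (qq⁻¹ ^ negCount kk) • Vimk pp rr (qminorGen ii kk)

/-- The negative ıquantum `n`-minor
`Δ^{ı−}(ii,jj) = Σ_{|kk| = jj} (−q)^{ℓ₀(kk)} (Δ(ii,kk))~ ∈ V^ı_{p,r}`. -/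
def iminorNeg {pp rr : ℕ} (ν : ℕ) (ii : Fin (nminus ν) → Fin (pp + 1))
    (jj : Fin (nminus ν) → Fin (rr + 1)) : Viq pp rr :=
  ∑ kk ∈ Finset.univ.filter
      (fun kk : Fin (nminus ν) → Fin (rr + 1) => absF ∘ kk = jj),
    ((-qq) ^ negCount kk) • Vimk pp rr (qminorGen ii kk)

/-- `𝔐⁺`: the span of the positive ıquantum `n`-minors in `V^ı_{p,r}`. -/
def MPos (ν pp rr : ℕ) : Submodule KK (Viq pp rr) :=
  Submodule.span KK
    {x | ∃ ii ∈ APos ν pp, ∃ jj ∈ APos ν rr, x = iminorPos ν ii jj}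

/-- `𝔐⁻`: the span of the negative ıquantum `n`-minors in `V^ı_{p,r}`. -/
def MNeg (ν pp rr : ℕ) : Submodule KK (Viq pp rr) :=
  Submodule.span KK
    {x | ∃ ii ∈ ANeg ν pp, ∃ jj ∈ ANeg ν rr, x = iminorNeg ν ii jj}

/-- The right `V_{P,R}`-submodule `𝓘` of `V^ı_{p,r}` generated by `𝔐⁺ ∪ 𝔐⁻`. -/
def Iscr (ν pp rr : ℕ) : Submodule KK (Viq pp rr) :=
  Submodule.span KK
    {x | ∃ m ∈ (MPos ν pp rr : Set (Viq pp rr)) ∪ (MNeg ν pp rr : Set (Viq pp rr)),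
      ∃ g : Vc pp rr, x = rmulQ g m}

/-! ### The `U_N`-action on `P_{P,R} = V_{P,N} ⊗ V_{N,R}` and its invariants -/

/-- The left `U_N`-action on `P_{P,R} = V_{P,N} ⊗ V_{N,R}`:
`x(f⊗g) = (x₍₁₎·f) ⊗ (g·S(x₍₂₎))`. -/
def tensActV {pp ν rr : ℕ} (hd : HopfData ν) (rd : RepData ν)
    (L : LModAlg pp ν hd rd) (R : RModAlg ν rr hd rd) :
    U ν →ₗ[KK] (Vc pp ν ⊗[KK] Vc ν rr) →ₗ[KK] (Vc pp ν ⊗[KK] Vc ν rr) :=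
  (TensorProduct.lift
    (((TensorProduct.mapBilinear (RingHom.id KK) (Vc pp ν) (Vc ν rr) (Vc pp ν) (Vc ν rr)) ∘ₗ L.act).compl₂
      (R.act ∘ₗ (MulOpposite.opLinearEquiv KK).symm.toLinearMap ∘ₗ hd.S.toLinearMap))) ∘ₗ
    hd.Δ.toLinearMap

/-- The space `X_{P,R}` of `U_N`-invariants of `P_{P,R}`. -/
def XSet {pp ν rr : ℕ} (hd : HopfData ν) (rd : RepData ν)
    (L : LModAlg pp ν hd rd) (R : RModAlg ν rr hd rd) : Set (Vc pp ν ⊗[KK] Vc ν rr) :=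
  {u | ∀ x : U ν, tensActV hd rd L R x u = hd.ε x • u}

/-- The invariant `X_{ij} = Σ_k t_{ik} ⊗ t_{kj} ∈ P_{P,R}`. -/
def XEl (pp ν rr : ℕ) (i : Fin (pp + 1)) (j : Fin (rr + 1)) : Vc pp ν ⊗[KK] Vc ν rr :=
  ∑ k : Fin (ν + 1), Tc i k ⊗ₜ[KK] Tc k j

end IQG
namespace IQG

/-- The full family `T₀, …, T_{d−1}` of Hecke-operator matrices on `𝕍_M^{⊗d}`. -/
def hMatAll (μ : ℕ) : {d : ℕ} → Fin d →
    Matrix (Fin d → Fin (μ + 1)) (Fin d → Fin (μ + 1)) KK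
  | 0, a => a.elim0
  | _ + 1, a => Fin.cases (hMat0 μ _) (fun b => hMatS μ b) a

lemma rmulQ_add {ν μ : ℕ} (g g' : Vc ν μ) : rmulQ (g + g') = rmulQ g + rmulQ g' := by
  apply LinearMap.ext
  intro v
  obtain ⟨f, rfl⟩ := (Isub ν μ).mkQ_surjective v
  simp [rmulQ, Vimk, mul_add]

lemma rmulQ_smul {ν μ : ℕ} (c : KK) (g : Vc ν μ) : rmulQ (c • g) = c • rmulQ g := by
  apply LinearMap.ext
  intro v
  obtain ⟨f, rfl⟩ := (Isub ν μ).mkQ_surjective v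
  simp [rmulQ, Vimk, mul_smul_comm]

/-- The right `V_{P,N} ⊗ V_{N,R}`-action on `P^ı_{p,r} = V^ı_{p,n} ⊗ V^ı_{n,r}` by
componentwise right multiplication. -/
def rmulT {pp ν rr : ℕ} :
    (Vc pp ν ⊗[KK] Vc ν rr) →ₗ[KK]
      (Viq pp ν ⊗[KK] Viq ν rr) →ₗ[KK] (Viq pp ν ⊗[KK] Viq ν rr) :=
  TensorProduct.lift (LinearMap.mk₂ KK
    (fun g1 g2 => TensorProduct.map (rmulQ g1) (rmulQ g2))
    (fun g g' g2 => by (try dsimp only); rw [rmulQ_add]; exact TensorProduct.map_add_left _ _ _)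
    (fun c g g2 => by (try dsimp only); rw [rmulQ_smul]; exact TensorProduct.map_smul_left _ _ _)
    (fun g g2 g2' => by (try dsimp only); rw [rmulQ_add]; exact TensorProduct.map_add_right _ _ _)
    (fun c g g2 => by (try dsimp only); rw [rmulQ_smul]; exact TensorProduct.map_smul_right _ _ _))

lemma rhoFun_add {ν μ d : ℕ} (α α' : Module.Dual KK ↥(Vid ν μ d)) :
    rhoFun (α + α') = rhoFun α + rhoFun α' := by
  apply LinearMap.ext
  intro v
  funext ii
  simp [rhoFun, Matrix.mulVecLin_apply, Matrix.mulVec, dotProduct, add_mul,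
    Finset.sum_add_distrib]

lemma rhoFun_smul {ν μ d : ℕ} (c : KK) (α : Module.Dual KK ↥(Vid ν μ d)) :
    rhoFun (c • α) = c • rhoFun α := by
  apply LinearMap.ext
  intro v
  funext ii
  simp [rhoFun, Matrix.mulVecLin_apply, Matrix.mulVec, dotProduct, Finset.mul_sum,
    mul_assoc]

/-- The bilinear composition map `(α, β) ↦ ρ_{p,n,d}(α) ∘ ρ_{n,r,d}(β)`. -/
def rhoBil (pp ν rr d : ℕ) :
    Module.Dual KK ↥(Vid pp ν d) →ₗ[KK] Module.Dual KK ↥(Vid ν rr d) →ₗ[KK]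
      (((Fin d → Fin (rr + 1)) → KK) →ₗ[KK] ((Fin d → Fin (pp + 1)) → KK)) :=
  LinearMap.mk₂ KK (fun α β => rhoFun α ∘ₗ rhoFun β)
    (fun α α' β => by (try dsimp only); rw [rhoFun_add]; ext v; simp)
    (fun c α β => by (try dsimp only); rw [rhoFun_smul]; ext v; simp)
    (fun α β β' => by (try dsimp only); rw [rhoFun_add]; ext v; simp)
    (fun c α β => by (try dsimp only); rw [rhoFun_smul]; ext v; simp)

/-- The set of quantum `N`-minors `Δ(ii,jj)`, `ii ∈ 𝔄_{N,P}`, `jj ∈ 𝔄_{N,R}`, in `V_{P,R}`. -/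
def NminorSet (ν pp rr : ℕ) : Set (Vc pp rr) :=
  {f | ∃ ii : Fin (ν + 1) → Fin (pp + 1), ∃ jj : Fin (ν + 1) → Fin (rr + 1),
    StrictMono ii ∧ StrictMono jj ∧ f = qminor ii jj}

end IQG
namespace IQG

/-! #### Auxiliary lemmas for Statement 19 -/

lemma tprod_zero' {ν μ : ℕ} (ii : Fin 0 → Fin (ν + 1)) (jj : Fin 0 → Fin (μ + 1)) :
    tprod ii jj = 1 := by
  simp [tprod]

lemma tprod_succ' {ν μ d : ℕ} (ii : Fin (d + 1) → Fin (ν + 1)) (jj : Fin (d + 1) → Fin (μ + 1)) :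
    tprod ii jj = Tc (ii 0) (jj 0) * tprod (Fin.tail ii) (Fin.tail jj) := by
  simp [tprod, List.ofFn_succ, Fin.tail]

lemma tprod_one' {ν μ : ℕ} (ii : Fin 1 → Fin (ν + 1)) (jj : Fin 1 → Fin (μ + 1)) :
    tprod ii jj = Tc (ii 0) (jj 0) := by
  rw [tprod_succ', tprod_zero', mul_one]

lemma matCoeff_zero' {ν : ℕ} (hd : HopfData ν) (rd : RepData ν) (x : U ν)
    (ii jj : Fin 0 → Fin (ν + 1)) :
    matCoeff hd rd 0 x ii jj = hd.ε x := rfl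

lemma matCoeff_one' {ν : ℕ} (hd : HopfData ν) (rd : RepData ν) (x : U ν)
    (ii jj : Fin 1 → Fin (ν + 1)) :
    matCoeff hd rd 1 x ii jj = rd.ρ x (ii 0) (jj 0) := rfl

lemma Lact_tprod {pp ν : ℕ} (hd : HopfData ν) (rd : RepData ν) (L : LModAlg pp ν hd rd) :
    ∀ (d : ℕ) (x : U ν) (ii : Fin d → Fin (pp + 1)) (kk : Fin d → Fin (ν + 1)),
      L.act x (tprod ii kk) =
        ∑ kk' : Fin d → Fin (ν + 1), matCoeff hd rd d x kk' kk • tprod ii kk' := by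
  intro d
  induction d using Nat.twoStepInduction with
  | zero =>
    intro x ii kk
    rw [tprod_zero', L.act_unit]
    simp [matCoeff_zero', tprod_zero']
  | one =>
    intro x ii kk
    rw [tprod_one', L.act_gen]
    refine Fintype.sum_equiv (Equiv.funUnique (Fin 1) (Fin (ν + 1))).symm _ _ ?_
    intro k
    simp [matCoeff_one', tprod_one']
  | more d IH0 IH1 =>
    intro x ii kk
    rw [tprod_succ', L.act_alg]
    simp only [matCoeff, LinearMap.comp_apply, AlgHom.toLinearMap_apply]
    generalize hd.Δ x = t
    induction t using TensorProduct.induction_on with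
    | zero => simp
    | add t1 t2 h1 h2 =>
      simp only [map_add, Pi.add_apply, add_smul, Finset.sum_add_distrib, h1, h2]
    | tmul y z =>
      simp only [TensorProduct.lift.tmul, mulBil, LinearMap.mk₂_apply]
      rw [L.act_gen, IH1 z (Fin.tail ii) (Fin.tail kk), Fintype.sum_mul_sum,
        ← Equiv.sum_comp (Fin.consEquiv fun _ : Fin (d + 2) => Fin (ν + 1)),
        Fintype.sum_prod_type]
      refine Finset.sum_congr rfl fun k _ => Finset.sum_congr rfl fun m _ => ?_
      simp only [Fin.consEquiv, Equiv.coe_fn_mk]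
      rw [tprod_succ' ii (Fin.cons k m)]
      simp [Fin.cons_zero, Fin.tail_cons, smul_mul_smul_comm, smul_smul, mul_comm]

lemma Ract_tprod {ν rr : ℕ} (hd : HopfData ν) (rd : RepData ν) (R : RModAlg ν rr hd rd) :
    ∀ (d : ℕ) (x : U ν) (kk : Fin d → Fin (ν + 1)) (jj : Fin d → Fin (rr + 1)),
      R.act x (tprod kk jj) =
        ∑ kk' : Fin d → Fin (ν + 1), matCoeff hd rd d x kk kk' • tprod kk' jj := by
  intro d
  induction d using Nat.twoStepInduction with
  | zero =>
    intro x kk jj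
    rw [tprod_zero', R.act_unit]
    simp [matCoeff_zero', tprod_zero']
  | one =>
    intro x kk jj
    rw [tprod_one', R.act_gen]
    refine Fintype.sum_equiv (Equiv.funUnique (Fin 1) (Fin (ν + 1))).symm _ _ ?_
    intro k
    simp [matCoeff_one', tprod_one']
  | more d IH0 IH1 =>
    intro x kk jj
    rw [tprod_succ', R.act_alg]
    simp only [matCoeff, LinearMap.comp_apply, AlgHom.toLinearMap_apply]
    generalize hd.Δ x = t
    induction t using TensorProduct.induction_on with
    | zero => simp
    | add t1 t2 h1 h2 =>
      simp only [map_add, Pi.add_apply, add_smul, Finset.sum_add_distrib, h1, h2]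
    | tmul y z =>
      simp only [TensorProduct.lift.tmul, mulBil, LinearMap.mk₂_apply]
      rw [R.act_gen, IH1 z (Fin.tail kk) (Fin.tail jj), Fintype.sum_mul_sum,
        ← Equiv.sum_comp (Fin.consEquiv fun _ : Fin (d + 2) => Fin (ν + 1)),
        Fintype.sum_prod_type]
      refine Finset.sum_congr rfl fun k _ => Finset.sum_congr rfl fun m _ => ?_
      simp only [Fin.consEquiv, Equiv.coe_fn_mk]
      rw [tprod_succ' (Fin.cons k m) jj]
      simp [Fin.cons_zero, Fin.tail_cons, smul_mul_smul_comm, smul_smul, mul_comm]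

/-- Lemma 3.1. For all `d ≥ 1` and `x ∈ U_n^ı`,
`ρ_{p,n,d}(α·x) ∘ ρ_{n,r,d}(β) = ρ_{p,n,d}(α) ∘ ρ_{n,r,d}(x·β)` (where `α·x = α ∘ (x·–)`
and `x·β = β ∘ (–·x)` are the dual actions); consequently the composition map
`Φ_{p,r,d} : V^{ı*}_{p,n,d} ⊗ V^{ı*}_{n,r,d} → Hom(𝕍_R^{⊗d}, 𝕍_P^{⊗d})` factors through
`V^{ı*}_{p,n,d} ⊗_{U_n^ı} V^{ı*}_{n,r,d}`. -/
theorem Phi_factors (pp ν rr d : ℕ) (hd1 : 1 ≤ d)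
    (hdN : HopfData ν) (rdN : RepData ν)
    (L : LModAlg pp ν hdN rdN) (R : RModAlg ν rr hdN rdN)
    (aLd : ↥(Ui ν) →ₗ[KK] ↥(Vid pp ν d) →ₗ[KK] ↥(Vid pp ν d))
    (haLd : ∀ (x : ↥(Ui ν)) (ii : Fin d → Fin (pp + 1)) (kk : Fin d → Fin (ν + 1)),
      ((aLd x (itprodD ii kk) : ↥(Vid pp ν d)) : Viq pp ν) =
        Vimk pp ν (L.act x.val (tprod ii kk)))
    (aRd : ↥(Ui ν) →ₗ[KK] ↥(Vid ν rr d) →ₗ[KK] ↥(Vid ν rr d))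
    (haRd : ∀ (x : ↥(Ui ν)) (kk : Fin d → Fin (ν + 1)) (jj : Fin d → Fin (rr + 1)),
      ((aRd x (itprodD kk jj) : ↥(Vid ν rr d)) : Viq ν rr) =
        Vimk ν rr (R.act x.val (tprod kk jj))) :
    (∀ (x : ↥(Ui ν)) (α : Module.Dual KK ↥(Vid pp ν d))
        (β : Module.Dual KK ↥(Vid ν rr d)),
      rhoFun (α ∘ₗ aLd x) ∘ₗ rhoFun β = rhoFun α ∘ₗ rhoFun (β ∘ₗ aRd x)) ∧
    Submodule.span KK
      {u : Module.Dual KK ↥(Vid pp ν d) ⊗[KK] Module.Dual KK ↥(Vid ν rr d) |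
        ∃ (x : ↥(Ui ν)) (α : Module.Dual KK ↥(Vid pp ν d))
          (β : Module.Dual KK ↥(Vid ν rr d)),
          u = (α ∘ₗ aLd x) ⊗ₜ[KK] β - α ⊗ₜ[KK] (β ∘ₗ aRd x)} ≤
      LinearMap.ker (TensorProduct.lift (rhoBil pp ν rr d)) := by
  classical
  have hα : ∀ (x : ↥(Ui ν)) (α : Module.Dual KK ↥(Vid pp ν d))
      (ii : Fin d → Fin (pp + 1)) (kk : Fin d → Fin (ν + 1)),
      α (aLd x (itprodD ii kk)) =
        ∑ kk', matCoeff hdN rdN d (x : U ν) kk' kk * α (itprodD ii kk') := by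
    intro x α ii kk
    have h1 : aLd x (itprodD ii kk) =
        ∑ kk', matCoeff hdN rdN d (x : U ν) kk' kk • itprodD ii kk' := by
      apply Subtype.ext
      rw [haLd x ii kk, Lact_tprod hdN rdN L d (x : U ν) ii kk]
      simp [itprodD, itprod, map_sum, map_smul]
    rw [h1, map_sum]
    simp [smul_eq_mul]
  have hβ : ∀ (x : ↥(Ui ν)) (β : Module.Dual KK ↥(Vid ν rr d))
      (kk : Fin d → Fin (ν + 1)) (jj : Fin d → Fin (rr + 1)),
      β (aRd x (itprodD kk jj)) =
        ∑ kk', matCoeff hdN rdN d (x : U ν) kk kk' * β (itprodD kk' jj) := by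
    intro x β kk jj
    have h1 : aRd x (itprodD kk jj) =
        ∑ kk', matCoeff hdN rdN d (x : U ν) kk kk' • itprodD kk' jj := by
      apply Subtype.ext
      rw [haRd x kk jj, Ract_tprod hdN rdN R d (x : U ν) kk jj]
      simp [itprodD, itprod, map_sum, map_smul]
    rw [h1, map_sum]
    simp [smul_eq_mul]
  have key : ∀ (x : ↥(Ui ν)) (α : Module.Dual KK ↥(Vid pp ν d))
      (β : Module.Dual KK ↥(Vid ν rr d)),
      rhoFun (α ∘ₗ aLd x) ∘ₗ rhoFun β = rhoFun α ∘ₗ rhoFun (β ∘ₗ aRd x) := by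
    intro x α β
    unfold rhoFun
    rw [← Matrix.mulVecLin_mul, ← Matrix.mulVecLin_mul]
    congr 1
    ext ii jj
    simp only [Matrix.mul_apply, Matrix.of_apply, LinearMap.coe_comp, Function.comp_apply]
    simp only [hα x α, hβ x β]
    simp only [Finset.sum_mul, Finset.mul_sum]
    rw [Finset.sum_comm]
    exact Finset.sum_congr rfl fun a _ => Finset.sum_congr rfl fun b _ => by ring
  refine ⟨key, ?_⟩
  rw [Submodule.span_le]
  rintro u ⟨x, α, β, rfl⟩
  simp only [SetLike.mem_coe, LinearMap.mem_ker, map_sub, TensorProduct.lift.tmul]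
  simp only [rhoBil, LinearMap.mk₂_apply]
  rw [key x α β, sub_self]

end IQG
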